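/- arXiv:1801.04835 — 2 statements merged into one kernel-verified Lean document; each statement's English description precedes it below -/
import Mathlib

section
/- Let s ≥ 2 and let R ⊆ ℤ² be a finite nonempty region, with Ω its set of (1,s)-tilings (Ω is nonempty since the all-unit-tiles tiling {(q,1) : q ∈ R} belongs to Ω). Define the matrix P on Ω by P(T,T') = 1/(2|R|) whenever T ≠ T' differ by a central flip, P(T,T') = 0 for all other T' ≠ T, and P(T,T) = 1 − Σ_{T'≠T} P(T,T'). Then P is a symmetric row-stochastic matrix, the resulting Markov chain is irreducible and aperiodic, and its unique stationary distribution is the uniform distribution on Ω. -/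
/-!
Every tiling is joined to the all-unit tiling by flipping its s×s tiles down one at a time, so
the flip graph is connected. Each flip out of `T` is located by a cell `p ∈ R`: it flips down the
s-tile at `p` if `T` has one, and otherwise flips up the s×s block of unit tiles at `p`. Hence `T`
has at most `|R|` flip neighbours, the off-diagonal row sum is at most `1/2`, and every holding
probability is positive. Symmetry makes `P` doubly stochastic, and a stationary distribution of
an irreducible doubly stochastic kernel is constant: at a state where it is maximal, stationarity
forces every predecessor to attain the maximum too.
-/

open Finset

/-- The k×k square of cells with lower-left corner `p`. -/
def sqCells (p : ℤ × ℤ) (k : ℕ) : Finset (ℤ × ℤ) :=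
  (Finset.range k ×ˢ Finset.range k).image fun ij => (p.1 + ij.1, p.2 + ij.2)

/-- `T` is an (m,s)-tiling of the finite region `R`. -/
def IsTiling (m s : ℕ) (R : Finset (ℤ × ℤ)) (T : Finset ((ℤ × ℤ) × ℕ)) : Prop :=
  (∀ t ∈ T, t.2 = m ∨ t.2 = s) ∧
  (∀ t ∈ T, ∀ t' ∈ T, t ≠ t' → Disjoint (sqCells t.1 t.2) (sqCells t'.1 t'.2)) ∧
  T.biUnion (fun t => sqCells t.1 t.2) = R

/-- `T'` is obtained from `T` by replacing one s×s tile by s² unit tiles. -/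
def centralFlipTo (s : ℕ) (T T' : Finset ((ℤ × ℤ) × ℕ)) : Prop :=
  ∃ p : ℤ × ℤ, (p, s) ∈ T ∧
    T' = (T.erase (p, s)) ∪ (sqCells p s).image (fun q => (q, 1))

/-- `T` and `T'` differ by a central flip. -/
def CentralFlip (s : ℕ) (T T' : Finset ((ℤ × ℤ) × ℕ)) : Prop :=
  centralFlipTo s T T' ∨ centralFlipTo s T' T

/-- `t`-step transition probabilities of the kernel `P` on the finite state space `Ω`. -/
noncomputable def matPow {X : Type*} [DecidableEq X] (Ω : Finset X) (P : X → X → ℝ) :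
    ℕ → X → X → ℝ
  | 0 => fun x y => if x = y then 1 else 0
  | t + 1 => fun x y => ∑ z ∈ Ω, matPow Ω P t x z * P z y

section Tilings

lemma sqCells_one (p : ℤ × ℤ) : sqCells p 1 = {p} := by
  simp [sqCells]

lemma mem_sqCells_self (p : ℤ × ℤ) {k : ℕ} (hk : 0 < k) : p ∈ sqCells p k :=
  mem_image.mpr ⟨(0, 0), by simp [hk], by simp⟩

def unitTiling (A : Finset (ℤ × ℤ)) : Finset ((ℤ × ℤ) × ℕ) :=
  A.image fun q => (q, 1)

lemma mem_unitTiling {A : Finset (ℤ × ℤ)} {t : (ℤ × ℤ) × ℕ} :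
    t ∈ unitTiling A ↔ t.1 ∈ A ∧ t.2 = 1 := by
  constructor
  · intro h
    obtain ⟨q, hq, rfl⟩ := mem_image.mp h
    exact ⟨hq, rfl⟩
  · rintro ⟨h1, h2⟩
    exact mem_image.mpr ⟨t.1, h1, by rw [← h2]⟩

lemma biUnion_unitTiling (A : Finset (ℤ × ℤ)) :
    (unitTiling A).biUnion (fun t => sqCells t.1 t.2) = A := by
  ext q
  simp only [mem_biUnion, mem_unitTiling]
  constructor
  · rintro ⟨t, ⟨ht, h1⟩, hq⟩
    rw [h1, sqCells_one, mem_singleton] at hq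
    exact hq ▸ ht
  · exact fun hq => ⟨(q, 1), ⟨hq, rfl⟩, by simp [sqCells_one]⟩

lemma isTiling_unitTiling (s : ℕ) (R : Finset (ℤ × ℤ)) : IsTiling 1 s R (unitTiling R) := by
  refine ⟨fun t ht => Or.inl (mem_unitTiling.mp ht).2, ?_, biUnion_unitTiling R⟩
  intro t ht t' ht' hne
  rw [(mem_unitTiling.mp ht).2, (mem_unitTiling.mp ht').2, sqCells_one, sqCells_one,
    disjoint_singleton]
  exact fun h => hne (Prod.ext h ((mem_unitTiling.mp ht).2.trans (mem_unitTiling.mp ht').2.symm))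


variable {s : ℕ} {R : Finset (ℤ × ℤ)} {T : Finset ((ℤ × ℤ) × ℕ)}

lemma IsTiling.sqCells_subset (hT : IsTiling 1 s R T) {t : (ℤ × ℤ) × ℕ} (ht : t ∈ T) :
    sqCells t.1 t.2 ⊆ R :=
  hT.2.2 ▸ subset_biUnion_of_mem (fun t : (ℤ × ℤ) × ℕ => sqCells t.1 t.2) ht

lemma IsTiling.eq_unitTiling (hT : IsTiling 1 s R T) (h : ∀ t ∈ T, t.2 ≠ s) :
    T = unitTiling R := by
  have hone : ∀ t ∈ T, t.2 = 1 := fun t ht => (hT.1 t ht).resolve_right (h t ht)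
  ext t
  rw [mem_unitTiling]
  constructor
  · intro ht
    refine ⟨hT.sqCells_subset ht ?_, hone t ht⟩
    rw [hone t ht, sqCells_one]
    exact mem_singleton_self _
  · rintro ⟨hR, h1⟩
    obtain ⟨u, hu, hcell⟩ := mem_biUnion.mp (hT.2.2 ▸ hR : t.1 ∈ T.biUnion _)
    rw [hone u hu, sqCells_one, mem_singleton] at hcell
    rwa [Prod.ext hcell.symm ((hone u hu).trans h1.symm)] at hu

def flipDown (s : ℕ) (T : Finset ((ℤ × ℤ) × ℕ)) (p : ℤ × ℤ) : Finset ((ℤ × ℤ) × ℕ) :=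
  T.erase (p, s) ∪ unitTiling (sqCells p s)

def flipUp (s : ℕ) (T : Finset ((ℤ × ℤ) × ℕ)) (p : ℤ × ℤ) : Finset ((ℤ × ℤ) × ℕ) :=
  (T \ unitTiling (sqCells p s)) ∪ {(p, s)}

lemma isTiling_flipDown (hT : IsTiling 1 s R T) {p : ℤ × ℤ} (hp : (p, s) ∈ T) :
    IsTiling 1 s R (flipDown s T p) := by
  obtain ⟨hsize, hdisj, hcover⟩ := hT
  have hold : ∀ t ∈ T.erase (p, s), ∀ u ∈ unitTiling (sqCells p s),
      Disjoint (sqCells t.1 t.2) (sqCells u.1 u.2) := by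
    intro t ht u hu
    obtain ⟨hq, h1⟩ := mem_unitTiling.mp hu
    rw [h1, sqCells_one]
    exact (hdisj t (mem_of_mem_erase ht) _ hp (ne_of_mem_erase ht)).mono_right
      (singleton_subset_iff.mpr hq)
  refine ⟨?_, ?_, ?_⟩
  · intro t ht
    rcases mem_union.mp ht with ht | ht
    · exact hsize t (mem_of_mem_erase ht)
    · exact Or.inl (mem_unitTiling.mp ht).2
  · intro t ht u hu hne
    rcases mem_union.mp ht with ht | ht <;> rcases mem_union.mp hu with hu | hu
    · exact hdisj t (mem_of_mem_erase ht) u (mem_of_mem_erase hu) hne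
    · exact hold t ht u hu
    · exact (hold u hu t ht).symm
    · exact (isTiling_unitTiling s (sqCells p s)).2.1 t ht u hu hne
  · rw [← hcover, flipDown, union_biUnion, biUnion_unitTiling, union_comm]
    conv_rhs => rw [← insert_erase hp, biUnion_insert]

lemma notMem_flipDown (hs : s ≠ 1) (T : Finset ((ℤ × ℤ) × ℕ)) (p : ℤ × ℤ) :
    (p, s) ∉ flipDown s T p := by
  simp [flipDown, mem_unitTiling, hs]

lemma filter_flipDown (hs : s ≠ 1) (T : Finset ((ℤ × ℤ) × ℕ)) (p : ℤ × ℤ) :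
    (flipDown s T p).filter (·.2 = s) = (T.filter (·.2 = s)).erase (p, s) := by
  ext t
  simp only [flipDown, mem_filter, mem_union, mem_erase, mem_unitTiling]
  constructor
  · rintro ⟨⟨hne, ht⟩ | ⟨-, h1⟩, hts⟩
    · exact ⟨hne, ht, hts⟩
    · exact absurd (h1.symm.trans hts) (Ne.symm hs)
  · rintro ⟨hne, ht, hts⟩
    exact ⟨Or.inl ⟨hne, ht⟩, hts⟩

lemma IsTiling.eq_flipUp_flipDown (hs : s ≠ 1) (hT : IsTiling 1 s R T) {p : ℤ × ℤ}
    (hp : (p, s) ∈ T) : T = flipUp s (flipDown s T p) p := by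
  have hfresh : Disjoint (T.erase (p, s)) (unitTiling (sqCells p s)) := by
    refine disjoint_left.mpr fun t ht hu => ?_
    obtain ⟨hq, h1⟩ := mem_unitTiling.mp hu
    have hts : t ≠ (p, s) := fun h => hs ((congrArg Prod.snd h).symm.trans h1)
    have := hT.2.1 t (mem_of_mem_erase ht) _ hp hts
    rw [h1, sqCells_one, disjoint_singleton_left] at this
    exact this hq
  rw [flipUp, flipDown, union_sdiff_right, sdiff_eq_self_of_disjoint hfresh,
    union_singleton, insert_erase hp]

open scoped Classical in
lemma card_filter_centralFlip_le (hs : 2 ≤ s) (hT : IsTiling 1 s R T)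
    {Ω : Finset (Finset ((ℤ × ℤ) × ℕ))} (hΩ : ∀ T' ∈ Ω, IsTiling 1 s R T') :
    (Ω.filter (CentralFlip s T)).card ≤ R.card := by
  have hs1 : s ≠ 1 := by omega
  have hs0 : 0 < s := by omega
  refine (card_le_card fun T' hT' => ?_).trans (card_image_le (s := R)
    (f := fun p => if (p, s) ∈ T then flipDown s T p else flipUp s T p))
  obtain ⟨hT'Ω, hcf⟩ := mem_filter.mp hT'
  rw [mem_image]
  rcases hcf with ⟨p, hp, hT'eq⟩ | ⟨p, hp, hTeq⟩
  · exact ⟨p, hT.sqCells_subset hp (mem_sqCells_self p hs0), by rw [if_pos hp, hT'eq]; rfl⟩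
  · change T = flipDown s T' p at hTeq
    subst hTeq
    refine ⟨p, (hΩ T' hT'Ω).sqCells_subset hp (mem_sqCells_self p hs0), ?_⟩
    rw [if_neg (notMem_flipDown hs1 T' p)]
    exact ((hΩ T' hT'Ω).eq_flipUp_flipDown hs1 hp).symm

lemma reflTransGen_unitTiling (hs : s ≠ 1) (hT : IsTiling 1 s R T) :
    Relation.ReflTransGen (fun U V => IsTiling 1 s R U ∧ centralFlipTo s U V) T
      (unitTiling R) := by
  induction hn : (T.filter (·.2 = s)).card generalizing T with
  | zero =>
    exact hT.eq_unitTiling (filter_eq_empty_iff.mp (card_eq_zero.mp hn)) ▸ .refl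
  | succ n ih =>
    obtain ⟨⟨p, k⟩, hpk⟩ := card_pos.mp (by omega : 0 < (T.filter (·.2 = s)).card)
    obtain rfl : s = k := (mem_filter.mp hpk).2.symm
    have hp : (p, s) ∈ T := (mem_filter.mp hpk).1
    refine .head (b := flipDown s T p) ⟨hT, p, hp, rfl⟩ (ih (isTiling_flipDown hT hp) ?_)
    rw [filter_flipDown hs, card_erase_of_mem hpk, hn, Nat.add_sub_cancel]

end Tilings

section MarkovChain

variable {X : Type*} {Ω : Finset X} {P : X → X → ℝ}

def PosStep (Ω : Finset X) (P : X → X → ℝ) (x y : X) : Prop :=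
  x ∈ Ω ∧ y ∈ Ω ∧ 0 < P x y

lemma reflTransGen_posStep_symm (hsymm : ∀ x ∈ Ω, ∀ y ∈ Ω, P x y = P y x) {x y : X}
    (h : Relation.ReflTransGen (PosStep Ω P) x y) : Relation.ReflTransGen (PosStep Ω P) y x :=
  haveI : Std.Symm (PosStep Ω P) :=
    ⟨fun _ _ ⟨ha, hb, hab⟩ => ⟨hb, ha, hsymm _ ha _ hb ▸ hab⟩⟩
  symm_of _ h

lemma eq_of_posStep_of_forall_le (hP : ∀ x ∈ Ω, ∀ y ∈ Ω, 0 ≤ P x y) {π : X → ℝ} {x y : X}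
    (hcol : ∑ z ∈ Ω, P z y = 1) (hπ : ∑ z ∈ Ω, π z * P z y = π y)
    (hmax : ∀ z ∈ Ω, π z ≤ π y) (hxy : PosStep Ω P x y) : π x = π y := by
  have hsum : ∑ z ∈ Ω, (π y - π z) * P z y = 0 := by
    simp only [sub_mul, sum_sub_distrib, ← mul_sum, hcol, hπ, mul_one, sub_self]
  have hterm := (sum_eq_zero_iff_of_nonneg fun z hz =>
    mul_nonneg (sub_nonneg.mpr (hmax z hz)) (hP z hz y hxy.2.1)).mp hsum x hxy.1
  linarith [(mul_eq_zero.mp hterm).resolve_right hxy.2.2.ne']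

theorem stationary_eq_uniform (hP : ∀ x ∈ Ω, ∀ y ∈ Ω, 0 ≤ P x y)
    (hcol : ∀ y ∈ Ω, ∑ x ∈ Ω, P x y = 1)
    (hconn : ∀ x ∈ Ω, ∀ y ∈ Ω, Relation.ReflTransGen (PosStep Ω P) x y) {π : X → ℝ}
    (hsum : ∑ x ∈ Ω, π x = 1) (hπ : ∀ y ∈ Ω, ∑ x ∈ Ω, π x * P x y = π y) :
    ∀ x ∈ Ω, π x = 1 / Ω.card := by
  have hΩ : Ω.Nonempty := nonempty_of_sum_ne_zero (hsum.trans_ne one_ne_zero)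
  obtain ⟨m, hm, hmax⟩ := exists_max_image Ω π hΩ
  have hreach {x : X} (h : Relation.ReflTransGen (PosStep Ω P) x m) : π x = π m := by
    induction h using Relation.ReflTransGen.head_induction_on with
    | refl => rfl
    | head hxz _ ih =>
      exact (eq_of_posStep_of_forall_le hP (hcol _ hxz.2.1) (hπ _ hxz.2.1)
        (fun w hw => ih ▸ hmax w hw) hxz).trans ih
  have hconst : ∀ x ∈ Ω, π x = π m := fun x hx => hreach (hconn x hx m hm)
  rw [sum_congr rfl hconst, sum_const, nsmul_eq_mul] at hsum
  exact fun x hx => (hconst x hx).trans (eq_one_div_of_mul_eq_one_right hsum)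

variable [DecidableEq X]

lemma matPow_nonneg (hP : ∀ x ∈ Ω, ∀ y ∈ Ω, 0 ≤ P x y) (t : ℕ) (x : X) {y : X} (hy : y ∈ Ω) :
    0 ≤ matPow Ω P t x y := by
  induction t generalizing y with
  | zero => unfold matPow; split <;> norm_num
  | succ t ih => exact sum_nonneg fun z hz => mul_nonneg (ih hz) (hP z hz y hy)

lemma matPow_succ_pos (hP : ∀ x ∈ Ω, ∀ y ∈ Ω, 0 ≤ P x y) {t : ℕ} {x y z : X}
    (hxy : 0 < matPow Ω P t x y) (hyz : PosStep Ω P y z) : 0 < matPow Ω P (t + 1) x z :=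
  (mul_pos hxy hyz.2.2).trans_le <| single_le_sum (f := fun w => matPow Ω P t x w * P w z)
    (fun w hw => mul_nonneg (matPow_nonneg hP t x hw) (hP w hw z hyz.2.1)) hyz.1

lemma exists_matPow_pos (hP : ∀ x ∈ Ω, ∀ y ∈ Ω, 0 ≤ P x y) {x y : X}
    (h : Relation.ReflTransGen (PosStep Ω P) x y) : ∃ t, 0 < matPow Ω P t x y := by
  induction h with
  | refl => exact ⟨0, by simp [matPow]⟩
  | tail _ hstep ih =>
    obtain ⟨t, ht⟩ := ih
    exact ⟨t + 1, matPow_succ_pos hP ht hstep⟩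

lemma matPow_one {x : X} (hx : x ∈ Ω) (y : X) : matPow Ω P 1 x y = P x y := by
  simp [matPow, hx]

end MarkovChain

section FlipChain

variable {s : ℕ} {R : Finset (ℤ × ℤ)} {Ω : Finset (Finset ((ℤ × ℤ) × ℕ))}
  {P : Finset ((ℤ × ℤ) × ℕ) → Finset ((ℤ × ℤ) × ℕ) → ℝ}

lemma flipChain_symm
    (hflip : ∀ T ∈ Ω, ∀ T' ∈ Ω, T ≠ T' → CentralFlip s T T' →
      P T T' = 1 / (2 * (R.card : ℝ)))
    (hzero : ∀ T ∈ Ω, ∀ T' ∈ Ω, T ≠ T' → ¬ CentralFlip s T T' → P T T' = 0) :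
    ∀ T ∈ Ω, ∀ T' ∈ Ω, P T T' = P T' T := by
  intro T hT T' hT'
  by_cases hne : T = T'
  · rw [hne]
  by_cases hcf : CentralFlip s T T'
  · rw [hflip T hT T' hT' hne hcf, hflip T' hT' T hT (Ne.symm hne) (Or.symm hcf)]
  · rw [hzero T hT T' hT' hne hcf, hzero T' hT' T hT (Ne.symm hne) (mt Or.symm hcf)]

open scoped Classical in
lemma flipChain_offDiag
    (hflip : ∀ T ∈ Ω, ∀ T' ∈ Ω, T ≠ T' → CentralFlip s T T' →
      P T T' = 1 / (2 * (R.card : ℝ)))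
    (hzero : ∀ T ∈ Ω, ∀ T' ∈ Ω, T ≠ T' → ¬ CentralFlip s T T' → P T T' = 0)
    {T T' : Finset ((ℤ × ℤ) × ℕ)} (hT : T ∈ Ω) (hT' : T' ∈ Ω) (hne : T ≠ T') :
    P T T' = if CentralFlip s T T' then 1 / (2 * (R.card : ℝ)) else 0 := by
  split_ifs with hcf
  · exact hflip T hT T' hT' hne hcf
  · exact hzero T hT T' hT' hne hcf

lemma flipChain_sum_erase_le (hs : 2 ≤ s) (hΩ : ∀ T, T ∈ Ω ↔ IsTiling 1 s R T)
    (hflip : ∀ T ∈ Ω, ∀ T' ∈ Ω, T ≠ T' → CentralFlip s T T' →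
      P T T' = 1 / (2 * (R.card : ℝ)))
    (hzero : ∀ T ∈ Ω, ∀ T' ∈ Ω, T ≠ T' → ¬ CentralFlip s T T' → P T T' = 0)
    {T : Finset ((ℤ × ℤ) × ℕ)} (hT : T ∈ Ω) :
    ∑ T' ∈ Ω.erase T, P T T' ≤ 1 / 2 := by
  classical
  have hneighbours : ((Ω.erase T).filter (CentralFlip s T)).card ≤ R.card :=
    (card_le_card (filter_subset_filter _ (erase_subset T Ω))).trans
      (card_filter_centralFlip_le hs ((hΩ T).mp hT) fun T' h => (hΩ T').mp h)
  calc ∑ T' ∈ Ω.erase T, P T T'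
      = ((Ω.erase T).filter (CentralFlip s T)).card * (1 / (2 * (R.card : ℝ))) := by
        rw [sum_congr rfl fun T' hT' => flipChain_offDiag hflip hzero hT (mem_of_mem_erase hT')
          (ne_of_mem_erase hT').symm, ← sum_filter, sum_const, nsmul_eq_mul]
    _ ≤ R.card * (1 / (2 * (R.card : ℝ))) := by gcongr
    _ ≤ 1 / 2 := by
        rcases eq_or_ne (R.card : ℝ) 0 with h | h
        · simp [h]
        · rw [mul_one_div, div_mul_cancel_right₀ h, one_div]

lemma posStep_of_centralFlipTo (hs : 2 ≤ s) (hΩ : ∀ T, T ∈ Ω ↔ IsTiling 1 s R T)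
    (hflip : ∀ T ∈ Ω, ∀ T' ∈ Ω, T ≠ T' → CentralFlip s T T' →
      P T T' = 1 / (2 * (R.card : ℝ)))
    {U V : Finset ((ℤ × ℤ) × ℕ)} (h : IsTiling 1 s R U ∧ centralFlipTo s U V) :
    PosStep Ω P U V := by
  obtain ⟨hU, p, hp, hV⟩ := h
  change V = flipDown s U p at hV
  subst hV
  have hUΩ := (hΩ U).mpr hU
  have hVΩ := (hΩ _).mpr (isTiling_flipDown hU hp)
  have hne : U ≠ flipDown s U p := fun h => notMem_flipDown (by omega) U p (h ▸ hp)
  have hR : (0 : ℝ) < R.card :=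
    Nat.cast_pos.mpr (card_pos.mpr ⟨p, hU.sqCells_subset hp (mem_sqCells_self p (by omega))⟩)
  refine ⟨hUΩ, hVΩ, ?_⟩
  rw [hflip U hUΩ _ hVΩ hne (Or.inl ⟨p, hp, rfl⟩)]
  positivity

lemma flipChain_diag_pos (hs : 2 ≤ s) (hΩ : ∀ T, T ∈ Ω ↔ IsTiling 1 s R T)
    (hflip : ∀ T ∈ Ω, ∀ T' ∈ Ω, T ≠ T' → CentralFlip s T T' →
      P T T' = 1 / (2 * (R.card : ℝ)))
    (hzero : ∀ T ∈ Ω, ∀ T' ∈ Ω, T ≠ T' → ¬ CentralFlip s T T' → P T T' = 0)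
    (hdiag : ∀ T ∈ Ω, P T T = 1 - ∑ T' ∈ Ω.erase T, P T T') :
    ∀ T ∈ Ω, 0 < P T T := fun T hT => by
  linarith [hdiag T hT, flipChain_sum_erase_le hs hΩ hflip hzero hT]

lemma flipChain_nonneg
    (hflip : ∀ T ∈ Ω, ∀ T' ∈ Ω, T ≠ T' → CentralFlip s T T' →
      P T T' = 1 / (2 * (R.card : ℝ)))
    (hzero : ∀ T ∈ Ω, ∀ T' ∈ Ω, T ≠ T' → ¬ CentralFlip s T T' → P T T' = 0)
    (hdiag_pos : ∀ T ∈ Ω, 0 < P T T) :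
    ∀ T ∈ Ω, ∀ T' ∈ Ω, 0 ≤ P T T' := by
  classical
  intro T hT T' hT'
  by_cases hne : T = T'
  · exact hne ▸ (hdiag_pos T hT).le
  · rw [flipChain_offDiag hflip hzero hT hT' hne]
    split_ifs <;> positivity

lemma flipChain_reflTransGen (hs : 2 ≤ s) (hΩ : ∀ T, T ∈ Ω ↔ IsTiling 1 s R T)
    (hflip : ∀ T ∈ Ω, ∀ T' ∈ Ω, T ≠ T' → CentralFlip s T T' →
      P T T' = 1 / (2 * (R.card : ℝ)))
    (hzero : ∀ T ∈ Ω, ∀ T' ∈ Ω, T ≠ T' → ¬ CentralFlip s T T' → P T T' = 0) :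
    ∀ T ∈ Ω, ∀ T' ∈ Ω, Relation.ReflTransGen (PosStep Ω P) T T' := by
  have hto_unit : ∀ T ∈ Ω, Relation.ReflTransGen (PosStep Ω P) T (unitTiling R) :=
    fun T hT => Relation.ReflTransGen.mono (fun _ _ h => posStep_of_centralFlipTo hs hΩ hflip h)
      _ _ (reflTransGen_unitTiling (by omega) ((hΩ T).mp hT))
  exact fun T hT T' hT' => (hto_unit T hT).trans
    (reflTransGen_posStep_symm (flipChain_symm hflip hzero) (hto_unit T' hT'))

end FlipChain

theorem MC_square_uniform_stationary_general (s : ℕ) (hs : 2 ≤ s)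
    (R : Finset (ℤ × ℤ))
    (Ω : Finset (Finset ((ℤ × ℤ) × ℕ)))
    (hΩ : ∀ T, T ∈ Ω ↔ IsTiling 1 s R T)
    (P : Finset ((ℤ × ℤ) × ℕ) → Finset ((ℤ × ℤ) × ℕ) → ℝ)
    (hflip : ∀ T ∈ Ω, ∀ T' ∈ Ω, T ≠ T' → CentralFlip s T T' →
        P T T' = 1 / (2 * (R.card : ℝ)))
    (hzero : ∀ T ∈ Ω, ∀ T' ∈ Ω, T ≠ T' → ¬ CentralFlip s T T' → P T T' = 0)
    (hdiag : ∀ T ∈ Ω, P T T = 1 - ∑ T' ∈ Ω.erase T, P T T') :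
    -- Ω is nonempty (the all-unit-tiles tiling belongs to it)
    Ω.Nonempty ∧
    -- P is symmetric
    (∀ T ∈ Ω, ∀ T' ∈ Ω, P T T' = P T' T) ∧
    -- P is row-stochastic
    (∀ T ∈ Ω, (∀ T' ∈ Ω, 0 ≤ P T T') ∧ ∑ T' ∈ Ω, P T T' = 1) ∧
    -- the chain is irreducible
    (∀ T ∈ Ω, ∀ T' ∈ Ω, ∃ t : ℕ, 0 < matPow Ω P t T T') ∧
    -- the chain is aperiodic: for each state, the gcd of return times is 1
    (∀ T ∈ Ω, ∀ d : ℕ, (∀ t : ℕ, 0 < t → 0 < matPow Ω P t T T → d ∣ t) → d = 1) ∧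
    -- the uniform distribution is stationary
    (∀ T' ∈ Ω, ∑ T ∈ Ω, (1 / (Ω.card : ℝ)) * P T T' = 1 / (Ω.card : ℝ)) ∧
    -- and it is the unique stationary distribution
    (∀ π : Finset ((ℤ × ℤ) × ℕ) → ℝ,
      (∀ T ∈ Ω, 0 ≤ π T) → ∑ T ∈ Ω, π T = 1 →
      (∀ T' ∈ Ω, ∑ T ∈ Ω, π T * P T T' = π T') →
      ∀ T ∈ Ω, π T = 1 / (Ω.card : ℝ)) := by
  have hsymm := flipChain_symm hflip hzero
  have hdiag_pos := flipChain_diag_pos hs hΩ hflip hzero hdiag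
  have hnonneg := flipChain_nonneg hflip hzero hdiag_pos
  have hrow : ∀ T ∈ Ω, ∑ T' ∈ Ω, P T T' = 1 := fun T hT => by
    rw [← add_sum_erase Ω _ hT, hdiag T hT, sub_add_cancel]
  have hcol : ∀ T' ∈ Ω, ∑ T ∈ Ω, P T T' = 1 := fun T' hT' => by
    rw [sum_congr rfl fun T hT => hsymm T hT T' hT', hrow T' hT']
  have hconn := flipChain_reflTransGen hs hΩ hflip hzero
  refine ⟨⟨unitTiling R, (hΩ _).mpr (isTiling_unitTiling s R)⟩, hsymm,
    fun T hT => ⟨hnonneg T hT, hrow T hT⟩,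
    fun T hT T' hT' => exists_matPow_pos hnonneg (hconn T hT T' hT'),
    fun T hT d hd => Nat.dvd_one.mp (hd 1 one_pos (matPow_one hT T ▸ hdiag_pos T hT)),
    fun T' hT' => by rw [← mul_sum, hcol T' hT', mul_one],
    fun π _ hsum hπ => stationary_eq_uniform hnonneg hcol hconn hsum hπ⟩

/-- The central-flip chain on the (1,s)-tilings of a finite nonempty region `R` (pick a
flip with probability `1/(2|R|)`) is a symmetric row-stochastic kernel, irreducible and
aperiodic, and its unique stationary distribution is the uniform distribution on `Ω`. -/
theorem MC_square_uniform_stationary (s : ℕ) (hs : 2 ≤ s)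
    (R : Finset (ℤ × ℤ)) (hR : R.Nonempty)
    (Ω : Finset (Finset ((ℤ × ℤ) × ℕ)))
    (hΩ : ∀ T, T ∈ Ω ↔ IsTiling 1 s R T)
    (P : Finset ((ℤ × ℤ) × ℕ) → Finset ((ℤ × ℤ) × ℕ) → ℝ)
    (hflip : ∀ T ∈ Ω, ∀ T' ∈ Ω, T ≠ T' → CentralFlip s T T' →
        P T T' = 1 / (2 * (R.card : ℝ)))
    (hzero : ∀ T ∈ Ω, ∀ T' ∈ Ω, T ≠ T' → ¬ CentralFlip s T T' → P T T' = 0)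
    (hdiag : ∀ T ∈ Ω, P T T = 1 - ∑ T' ∈ Ω.erase T, P T T') :
    -- Ω is nonempty (the all-unit-tiles tiling belongs to it)
    Ω.Nonempty ∧
    -- P is symmetric
    (∀ T ∈ Ω, ∀ T' ∈ Ω, P T T' = P T' T) ∧
    -- P is row-stochastic
    (∀ T ∈ Ω, (∀ T' ∈ Ω, 0 ≤ P T T') ∧ ∑ T' ∈ Ω, P T T' = 1) ∧
    -- the chain is irreducible
    (∀ T ∈ Ω, ∀ T' ∈ Ω, ∃ t : ℕ, 0 < matPow Ω P t T T') ∧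
    -- the chain is aperiodic: for each state, the gcd of return times is 1
    (∀ T ∈ Ω, ∀ d : ℕ, (∀ t : ℕ, 0 < t → 0 < matPow Ω P t T T → d ∣ t) → d = 1) ∧
    -- the uniform distribution is stationary
    (∀ T' ∈ Ω, ∑ T ∈ Ω, (1 / (Ω.card : ℝ)) * P T T' = 1 / (Ω.card : ℝ)) ∧
    -- and it is the unique stationary distribution
    (∀ π : Finset ((ℤ × ℤ) × ℕ) → ℝ,
      (∀ T ∈ Ω, 0 ≤ π T) → ∑ T ∈ Ω, π T = 1 →
      (∀ T' ∈ Ω, ∑ T ∈ Ω, π T * P T T' = π T') →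
      ∀ T ∈ Ω, π T = 1 / (Ω.card : ℝ)) :=
  MC_square_uniform_stationary_general s hs R Ω hΩ P hflip hzero hdiag
end

section
/- Let m, s ≥ 2 be integers with m ≠ s and gcd(m,s) = 1, and let R = {0,…,ms−1} × {0,…,m+s−1} ⊆ ℤ² be the ms × (m+s) rectangle (the horizontal block). Then R has exactly two (m,s)-tilings: a bottom row of s squares of size m with a top row of m squares of size s above it, namely {((im, 0), m) : 0 ≤ i < s} ∪ {((js, m), s) : 0 ≤ j < m}, and the tiling with the two rows interchanged, namely {((js, 0), s) : 0 ≤ j < m} ∪ {((im, s), m) : 0 ≤ i < s}. -/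
open Finset

/-- The a×b rectangular region in ℤ². -/
def rectRegion (a b : ℕ) : Finset (ℤ × ℤ) :=
  (Finset.range a ×ˢ Finset.range b).image fun ij => ((ij.1 : ℤ), (ij.2 : ℤ))

/-- A bottom row of s squares of size m with a top row of m squares of size s above it. -/
def hblockLowM (m s : ℕ) : Finset ((ℤ × ℤ) × ℕ) :=
  ((Finset.range s).image fun i : ℕ => ((((i * m : ℕ) : ℤ), (0 : ℤ)), m)) ∪
  ((Finset.range m).image fun j : ℕ => ((((j * s : ℕ) : ℤ), (m : ℤ)), s))

/-- A bottom row of m squares of size s with a top row of s squares of size m above it. -/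
def hblockLowS (m s : ℕ) : Finset ((ℤ × ℤ) × ℕ) :=
  ((Finset.range m).image fun j : ℕ => ((((j * s : ℕ) : ℤ), (0 : ℤ)), s)) ∪
  ((Finset.range s).image fun i : ℕ => ((((i * m : ℕ) : ℤ), (s : ℤ)), m))


/-!
Over any column of an (m,s)-tiling of the horizontal block the sizes of the tiles meeting it
add up to `m + s`, and for coprime `m, s ≥ 2` the only solution of `a * m + b * s = m + s` is
`a = b = 1`: every column meets a bottom tile standing on `y = 0` and a tile of the other size
on top of it. Say the tile at the origin has size `m`, and sweep the columns from left to
right. A new bottom tile can only start where the previous one ends, hence at a multiple of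
`m`, and a new top tile at a multiple of `s`; both at once would need `m * s ∣ x` with
`0 < x < m * s`. So at each column one of the two tiles carries on, the sizes never swap, and
the tiling is the one with all `m`-squares at the bottom.
-/

lemma Int.ediv_eq_iff_mem_Ico {k : ℤ} (hk : 0 < k) {x i : ℤ} :
    x / k = i ↔ x ∈ Ico (i * k) (i * k + k) := by
  rw [mem_Ico, le_antisymm_iff, ← Int.lt_add_one_iff, Int.le_ediv_iff_mul_le hk,
    Int.ediv_lt_iff_lt_mul hk, add_mul, one_mul, and_comm]

lemma Int.ediv_mem_Ico_iff {k : ℤ} (hk : 0 < k) {x n : ℤ} :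
    x / k ∈ Ico 0 n ↔ x ∈ Ico 0 (n * k) := by
  rw [mem_Ico, mem_Ico, Int.le_ediv_iff_mul_le hk, zero_mul, Int.ediv_lt_iff_lt_mul hk]

lemma exists_lt_mul_eq_of_dvd {k n : ℕ} {a : ℤ} (hk : 0 < k) (ha : 0 ≤ a)
    (han : a + k ≤ ((n * k : ℕ) : ℤ)) (hd : (k : ℤ) ∣ a) : ∃ i < n, ((i * k : ℕ) : ℤ) = a := by
  have hk' : (0 : ℤ) < k := by exact_mod_cast hk
  obtain ⟨j, rfl⟩ := hd
  have hj : j ∈ Ico 0 (n : ℤ) := by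
    rw [← Int.mul_ediv_cancel_left j hk'.ne', Int.ediv_mem_Ico_iff hk', mem_Ico]
    push_cast at han
    constructor <;> linarith
  rw [mem_Ico] at hj
  refine ⟨j.toNat, by omega, ?_⟩
  push_cast
  rw [Int.toNat_of_nonneg hj.1, mul_comm]

lemma Nat.Coprime.eq_one_of_mul_add_mul_eq {m s a b : ℕ} (hcop : m.Coprime s) (hm : 2 ≤ m)
    (hs : 2 ≤ s) (h : a * m + b * s = m + s) : a = 1 ∧ b = 1 := by
  rcases Nat.eq_zero_or_pos a with rfl | ha
  · have : s ∣ m := (Nat.dvd_add_left (dvd_refl s)).1 (h ▸ Dvd.intro_left b (by ring))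
    have := hcop.symm.eq_one_of_dvd this
    omega
  rcases Nat.eq_zero_or_pos b with rfl | hb
  · have : m ∣ s := (Nat.dvd_add_right (dvd_refl m)).1 (h ▸ Dvd.intro_left a (by ring))
    have := hcop.eq_one_of_dvd this
    omega
  have ham : m ≤ a * m := Nat.le_mul_of_pos_left m ha
  have hbs : s ≤ b * s := Nat.le_mul_of_pos_left s hb
  constructor
  · exact Nat.eq_of_mul_eq_mul_right (by omega) (by omega : a * m = 1 * m)
  · exact Nat.eq_of_mul_eq_mul_right (by omega) (by omega : b * s = 1 * s)

noncomputable def colSpan (t : (ℤ × ℤ) × ℕ) : Finset ℤ := Ico t.1.1 (t.1.1 + t.2)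

noncomputable def rowSpan (t : (ℤ × ℤ) × ℕ) : Finset ℤ := Ico t.1.2 (t.1.2 + t.2)

lemma sqCells_eq_product (p : ℤ × ℤ) (k : ℕ) :
    sqCells p k = Ico p.1 (p.1 + k) ×ˢ Ico p.2 (p.2 + k) := by
  ext ⟨x, y⟩
  simp only [sqCells, mem_image, mem_product, mem_range, mem_Ico, Prod.exists, Prod.mk.injEq]
  constructor
  · rintro ⟨i, j, ⟨hi, hj⟩, rfl, rfl⟩
    omega
  · rintro ⟨⟨hx, hx'⟩, hy, hy'⟩
    exact ⟨(x - p.1).toNat, (y - p.2).toNat, ⟨by omega, by omega⟩, by omega, by omega⟩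

lemma sqCells_eq_colSpan_product_rowSpan (t : (ℤ × ℤ) × ℕ) :
    sqCells t.1 t.2 = colSpan t ×ˢ rowSpan t :=
  sqCells_eq_product t.1 t.2

lemma rectRegion_eq_product (a b : ℕ) : rectRegion a b = Ico 0 (a : ℤ) ×ˢ Ico 0 (b : ℤ) := by
  ext ⟨x, y⟩
  simp only [rectRegion, mem_image, mem_product, mem_range, mem_Ico, Prod.exists, Prod.mk.injEq]
  constructor
  · rintro ⟨i, j, ⟨hi, hj⟩, rfl, rfl⟩
    omega
  · rintro ⟨⟨hx, hx'⟩, hy, hy'⟩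
    exact ⟨x.toNat, y.toNat, ⟨by omega, by omega⟩, by omega, by omega⟩

namespace IsTiling

variable {m s : ℕ} {R R' : Finset (ℤ × ℤ)} {T T' : Finset ((ℤ × ℤ) × ℕ)} {t t' : (ℤ × ℤ) × ℕ}

lemma symm (hT : IsTiling m s R T) : IsTiling s m R T :=
  ⟨fun t ht => (hT.1 t ht).symm, hT.2⟩

lemma size_pos (hT : IsTiling m s R T) (hm : 0 < m) (hs : 0 < s) (ht : t ∈ T) : 0 < t.2 := by
  rcases hT.1 t ht with h | h <;> omega

lemma sqCells_subset_s14 (hT : IsTiling m s R T) (ht : t ∈ T) : sqCells t.1 t.2 ⊆ R := by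
  rw [← hT.2.2]
  exact fun c hc => mem_biUnion.2 ⟨t, ht, hc⟩

lemma exists_mem_sqCells (hT : IsTiling m s R T) {c : ℤ × ℤ} (hc : c ∈ R) :
    ∃ t ∈ T, c ∈ sqCells t.1 t.2 := by
  rwa [← hT.2.2, mem_biUnion] at hc

lemma eq_of_mem_sqCells (hT : IsTiling m s R T) (ht : t ∈ T) (ht' : t' ∈ T) {c : ℤ × ℤ}
    (hc : c ∈ sqCells t.1 t.2) (hc' : c ∈ sqCells t'.1 t'.2) : t = t' := by
  by_contra hne
  exact disjoint_left.1 (hT.2.1 t ht t' ht' hne) hc hc'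

lemma eq_of_subset (hT : IsTiling m s R T) (hT' : IsTiling m s R T') (hm : 0 < m) (hs : 0 < s)
    (h : T ⊆ T') : T = T' := by
  refine h.antisymm fun t' ht' => ?_
  have hcorner : t'.1 ∈ sqCells t'.1 t'.2 := by
    have := hT'.size_pos hm hs ht'
    rw [sqCells_eq_product, mem_product, mem_Ico, mem_Ico]
    omega
  obtain ⟨t, ht, hct⟩ := hT.exists_mem_sqCells (hT'.sqCells_subset_s14 ht' hcorner)
  rwa [hT'.eq_of_mem_sqCells ht' (h ht) hcorner hct]

lemma union (hT : IsTiling m s R T) (hT' : IsTiling m s R' T') (hRR' : Disjoint R R') :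
    IsTiling m s (R ∪ R') (T ∪ T') := by
  refine ⟨fun t ht => (mem_union.1 ht).elim (hT.1 t) (hT'.1 t), ?_, ?_⟩
  · intro t ht t' ht' hne
    rcases mem_union.1 ht with h | h <;> rcases mem_union.1 ht' with h' | h'
    · exact hT.2.1 t h t' h' hne
    · exact hRR'.mono (hT.sqCells_subset_s14 h) (hT'.sqCells_subset_s14 h')
    · exact (hRR'.mono (hT.sqCells_subset_s14 h') (hT'.sqCells_subset_s14 h)).symm
    · exact hT'.2.1 t h t' h' hne
  · rw [union_biUnion, hT.2.2, hT'.2.2]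

lemma eq_or_start_eq_add_one (hT : IsTiling m s R T) (ht : t ∈ T) (ht' : t' ∈ T) {x y : ℤ}
    (hx : x ∈ colSpan t) (hx' : x + 1 ∈ colSpan t') (hy : y ∈ rowSpan t) (hy' : y ∈ rowSpan t') :
    t = t' ∨ (t.1.1 + t.2 = x + 1 ∧ t'.1.1 = x + 1) := by
  refine or_iff_not_imp_left.2 fun hne => ?_
  have hdisj : ∀ z ∈ colSpan t, z ∉ colSpan t' := fun z hz hz' =>
    hne (hT.eq_of_mem_sqCells ht ht' (c := (z, y))
      (by rw [sqCells_eq_colSpan_product_rowSpan]; exact mk_mem_product hz hy)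
      (by rw [sqCells_eq_colSpan_product_rowSpan]; exact mk_mem_product hz' hy'))
  simp only [colSpan, mem_Ico] at hx hx' hdisj
  constructor
  · by_contra
    exact hdisj (x + 1) ⟨by omega, by omega⟩ hx'
  · by_contra
    exact hdisj x hx ⟨by omega, by omega⟩

section Rectangle

variable {W H : ℕ}

lemma bounds (hT : IsTiling m s (rectRegion W H) T) (hm : 0 < m) (hs : 0 < s) (ht : t ∈ T) :
    0 ≤ t.1.1 ∧ t.1.1 + t.2 ≤ W ∧ 0 ≤ t.1.2 ∧ t.1.2 + t.2 ≤ H := by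
  have hk := hT.size_pos hm hs ht
  have hsub := hT.sqCells_subset_s14 ht
  rw [sqCells_eq_product, rectRegion_eq_product] at hsub
  have hlow := @hsub (t.1.1, t.1.2) (by simp only [mem_product, mem_Ico]; omega)
  have hhigh := @hsub (t.1.1 + t.2 - 1, t.1.2 + t.2 - 1)
    (by simp only [mem_product, mem_Ico]; omega)
  simp only [mem_product, mem_Ico] at hlow hhigh
  omega

lemma exists_corner_mem (hT : IsTiling m s (rectRegion W H) T) (hm : 0 < m)
    (hs : 0 < s) (hW : 0 < W) (hH : 0 < H) : ∃ k, (k = m ∨ k = s) ∧ ((0, 0), k) ∈ T := by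
  obtain ⟨t, ht, hcorner⟩ := hT.exists_mem_sqCells (c := (0, 0))
    (by rw [rectRegion_eq_product, mem_product, mem_Ico, mem_Ico]; omega)
  obtain ⟨hx, -, hy, -⟩ := hT.bounds hm hs ht
  rw [sqCells_eq_product, mem_product, mem_Ico, mem_Ico] at hcorner
  obtain ⟨⟨a, b⟩, k⟩ := t
  simp only at hx hy hcorner
  obtain ⟨rfl, rfl⟩ : a = 0 ∧ b = 0 := by omega
  exact ⟨k, hT.1 _ ht, ht⟩

lemma sum_size_filter_mem_colSpan (hT : IsTiling m s (rectRegion W H) T) {x : ℤ}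
    (hx : x ∈ Ico 0 (W : ℤ)) : ∑ t ∈ T with x ∈ colSpan t, t.2 = H := by
  have hcolumn : ∀ A B : Finset ℤ, #{c ∈ A ×ˢ B | c.1 = x} = if x ∈ A then #B else 0 := by
    intro A B
    rw [filter_product_left (· = x), filter_eq', card_product]
    split_ifs <;> simp
  calc ∑ t ∈ T with x ∈ colSpan t, t.2
      = ∑ t ∈ T, #{c ∈ sqCells t.1 t.2 | c.1 = x} := by
        rw [sum_filter]
        refine sum_congr rfl fun t _ => ?_
        rw [sqCells_eq_colSpan_product_rowSpan, hcolumn, rowSpan, Int.card_Ico]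
        simp
    _ = #{c ∈ rectRegion W H | c.1 = x} := by
        rw [← hT.2.2, filter_biUnion, card_biUnion]
        exact fun t ht t' ht' hne => (hT.2.1 t ht t' ht' hne).mono (filter_subset _ _)
          (filter_subset _ _)
    _ = H := by
        rw [rectRegion_eq_product, hcolumn, if_pos hx, Int.card_Ico]
        simp

end Rectangle

end IsTiling

def squareRow (k n : ℕ) (y : ℤ) : Finset ((ℤ × ℤ) × ℕ) :=
  (range n).image fun i : ℕ => ((((i * k : ℕ) : ℤ), y), k)

lemma isTiling_squareRow {m s k : ℕ} (hk : k = m ∨ k = s) (hk0 : 0 < k) (n : ℕ) (y : ℤ) :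
    IsTiling m s (Ico 0 ((n * k : ℕ) : ℤ) ×ˢ Ico y (y + k)) (squareRow k n y) := by
  have hk' : (0 : ℤ) < k := by exact_mod_cast hk0
  refine ⟨?_, ?_, ?_⟩
  · simp only [squareRow, mem_image]
    rintro _ ⟨i, -, rfl⟩
    exact hk
  · simp only [squareRow, mem_image]
    rintro _ ⟨i, -, rfl⟩ _ ⟨j, -, rfl⟩ hne
    rw [sqCells_eq_product, sqCells_eq_product, disjoint_product]
    refine Or.inl (disjoint_left.2 fun x hi hj => hne ?_)
    push_cast at hi hj
    rw [← Int.ediv_eq_iff_mem_Ico hk'] at hi hj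
    have : i = j := by exact_mod_cast hi.symm.trans hj
    rw [this]
  · ext ⟨x, z⟩
    simp only [squareRow, mem_biUnion, mem_image, mem_range, exists_exists_and_eq_and,
      sqCells_eq_product, mem_product]
    push_cast
    rw [← Int.ediv_mem_Ico_iff hk']
    constructor
    · rintro ⟨i, hi, hx, hz⟩
      rw [← Int.ediv_eq_iff_mem_Ico hk'] at hx
      rw [hx, mem_Ico]
      exact ⟨⟨by positivity, by exact_mod_cast hi⟩, hz⟩
    · rintro ⟨hx, hz⟩
      rw [mem_Ico] at hx
      refine ⟨(x / k).toNat, by omega, ?_, hz⟩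
      rw [← Int.ediv_eq_iff_mem_Ico hk']
      omega

lemma hblockLowM_eq_union (m s : ℕ) : hblockLowM m s = squareRow m s 0 ∪ squareRow s m m := rfl

lemma hblockLowS_eq_hblockLowM (m s : ℕ) : hblockLowS m s = hblockLowM s m := rfl

lemma isTiling_hblockLowM {m s : ℕ} (hm : 0 < m) (hs : 0 < s) :
    IsTiling m s (rectRegion (m * s) (m + s)) (hblockLowM m s) := by
  have hrect : rectRegion (m * s) (m + s) = Ico 0 ((s * m : ℕ) : ℤ) ×ˢ Ico 0 (0 + (m : ℤ)) ∪
      Ico 0 ((m * s : ℕ) : ℤ) ×ˢ Ico (m : ℤ) (m + s) := by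
    rw [rectRegion_eq_product, mul_comm s m, zero_add, ← product_union,
      Ico_union_Ico_eq_Ico (by positivity) (by omega), Nat.cast_add]
  rw [hrect, hblockLowM_eq_union]
  exact (isTiling_squareRow (Or.inl rfl) hm s 0).union (isTiling_squareRow (Or.inr rfl) hs m m)
    (disjoint_product.2 (Or.inr (by rw [zero_add]; exact Ico_disjoint_Ico_consecutive _ _ _)))

lemma isTiling_block_comm {m s : ℕ} {T : Finset ((ℤ × ℤ) × ℕ)} :
    IsTiling m s (rectRegion (m * s) (m + s)) T ↔ IsTiling s m (rectRegion (s * m) (s + m)) T := by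
  rw [mul_comm, add_comm]
  exact ⟨IsTiling.symm, IsTiling.symm⟩

/-- Where `t` would sit in `hblockLowM m s`, with the index bounds `< s` and `< m` left out. -/
def OnLowMGrid (m s : ℕ) (t : (ℤ × ℤ) × ℕ) : Prop :=
  (t.1.2 = 0 ∧ t.2 = m ∧ (m : ℤ) ∣ t.1.1) ∨ (t.1.2 = m ∧ t.2 = s ∧ (s : ℤ) ∣ t.1.1)

namespace IsTiling

variable {m s : ℕ} {T : Finset ((ℤ × ℤ) × ℕ)}

lemma card_filter_mem_colSpan_eq_two (hm : 2 ≤ m) (hs : 2 ≤ s) (hcop : m.Coprime s)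
    (hT : IsTiling m s (rectRegion (m * s) (m + s)) T) {x : ℤ} (hx : x ∈ Ico 0 ((m * s : ℕ) : ℤ)) :
    #{t ∈ T | x ∈ colSpan t} = 2 := by
  set F := T.filter (x ∈ colSpan ·)
  have hcount : #{t ∈ F | t.2 = m} * m + #{t ∈ F | ¬t.2 = m} * s = m + s := by
    rw [← hT.sum_size_filter_mem_colSpan hx, ← sum_filter_add_sum_filter_not F (·.2 = m)]
    congr 1 <;> refine (sum_const_nat fun t ht => ?_).symm
    · exact (mem_filter.1 ht).2
    · obtain ⟨htF, hne⟩ := mem_filter.1 ht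
      exact (hT.1 t (mem_filter.1 htF).1).resolve_left hne
  obtain ⟨hcm, hcs⟩ := hcop.eq_one_of_mul_add_mul_eq hm hs hcount
  rw [← card_filter_add_card_filter_not (·.2 = m), hcm, hcs]

lemma exists_stacked_pair (hm : 2 ≤ m) (hs : 2 ≤ s) (hcop : m.Coprime s)
    (hT : IsTiling m s (rectRegion (m * s) (m + s)) T) {x : ℤ} (hx0 : 0 ≤ x) (hx : x < m * s) :
    ∃ b ∈ T, ∃ u ∈ T, b.1.2 = 0 ∧ u.1.2 = b.2 ∧ b.2 + u.2 = m + s ∧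
      ∀ t ∈ T, x ∈ colSpan t ↔ t = b ∨ t = u := by
  have hxW : x ∈ Ico 0 ((m * s : ℕ) : ℤ) := by rw [mem_Ico]; push_cast; omega
  set F := T.filter (x ∈ colSpan ·) with hF
  obtain ⟨b, hb, hxb⟩ := hT.exists_mem_sqCells (c := (x, 0))
    (by rw [rectRegion_eq_product]; exact mk_mem_product hxW (by simp only [mem_Ico]; omega))
  rw [sqCells_eq_colSpan_product_rowSpan, mem_product] at hxb
  have hbF : b ∈ F := mem_filter.2 ⟨hb, hxb.1⟩
  obtain ⟨u, hu⟩ := card_eq_one.1 (by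
    rw [card_erase_of_mem hbF, hT.card_filter_mem_colSpan_eq_two hm hs hcop hxW] : #(F.erase b) = 1)
  have huF : u ∈ F.erase b := hu ▸ mem_singleton_self u
  have hub : u ≠ b := ne_of_mem_erase huF
  have hFbu : F = {b, u} := by rw [← insert_erase hbF, hu]
  have hsum : b.2 + u.2 = m + s := by
    rw [← sum_pair hub.symm, ← hFbu, hT.sum_size_filter_mem_colSpan hxW]
  obtain ⟨huT, hxu⟩ := mem_filter.1 (mem_of_mem_erase huF)
  have hbb := hT.bounds (by omega) (by omega) hb
  have hub' := hT.bounds (by omega) (by omega) huT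
  have hu2 := hT.size_pos (by omega) (by omega) huT
  have hbu : b.2 ≤ u.1.2 := by
    by_contra hlt
    refine hub (hT.eq_of_mem_sqCells huT hb (c := (x, u.1.2)) ?_ ?_) <;>
      rw [sqCells_eq_colSpan_product_rowSpan, mem_product, rowSpan, mem_Ico]
    · exact ⟨hxu, by omega, by omega⟩
    · simp only [rowSpan, mem_Ico] at hxb
      exact ⟨hxb.1, by omega, by omega⟩
  refine ⟨b, hb, u, huT, ?_, by push_cast at hub'; omega, hsum, fun t ht => ?_⟩
  · simp only [rowSpan, mem_Ico] at hxb; omega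
  · have htF : t ∈ F ↔ t = b ∨ t = u := by rw [hFbu, mem_insert, mem_singleton]
    rw [← htF, hF, mem_filter]
    exact ⟨fun h => ⟨ht, h⟩, fun h => h.2⟩

lemma onLowMGrid_of_zero_mem_colSpan (hm : 2 ≤ m) (hs : 2 ≤ s) (hcop : m.Coprime s)
    (hT : IsTiling m s (rectRegion (m * s) (m + s)) T) (h0 : ((0, 0), m) ∈ T) :
    ∀ t ∈ T, 0 ∈ colSpan t → OnLowMGrid m s t := by
  obtain ⟨b, hb, u, hu, hby, huy, hsum, hcol⟩ :=
    hT.exists_stacked_pair hm hs hcop le_rfl (by positivity)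
  have hbpos := hT.size_pos (by omega) (by omega) hb
  have hb0 : b = ((0, 0), m) := by
    refine hT.eq_of_mem_sqCells hb h0 (c := (0, 0)) ?_ ?_ <;>
      rw [sqCells_eq_colSpan_product_rowSpan, mem_product]
    · exact ⟨(hcol b hb).2 (Or.inl rfl), by simp only [rowSpan, hby, mem_Ico]; omega⟩
    · simp only [colSpan, rowSpan, mem_Ico]; omega
  have hu0 : u.1.1 = 0 := by
    have := (hcol u hu).2 (Or.inr rfl)
    have := (hT.bounds (by omega) (by omega) hu).1
    simp only [colSpan, mem_Ico] at *
    omega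
  intro t ht h
  rcases (hcol t ht).1 h with rfl | rfl
  · exact Or.inl ⟨hby, by rw [hb0], by rw [hb0]; exact dvd_zero _⟩
  · have hbm : b.2 = m := by rw [hb0]
    exact Or.inr ⟨by rw [huy, hbm], by omega, by rw [hu0]; exact dvd_zero _⟩

lemma onLowMGrid_succ (hm : 2 ≤ m) (hs : 2 ≤ s) (hcop : m.Coprime s)
    (hT : IsTiling m s (rectRegion (m * s) (m + s)) T) {x : ℤ} (hx0 : 0 ≤ x) (hx : x + 1 < m * s)
    (ih : ∀ t ∈ T, x ∈ colSpan t → OnLowMGrid m s t) :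
    ∀ t ∈ T, x + 1 ∈ colSpan t → OnLowMGrid m s t := by
  obtain ⟨b₀, hb₀, u₀, hu₀, hb₀y, hu₀y, hsum₀, hcol₀⟩ :=
    hT.exists_stacked_pair hm hs hcop hx0 (by omega)
  obtain ⟨b, hb, u, hu, hby, huy, hsum, hcol⟩ := hT.exists_stacked_pair hm hs hcop (by omega) hx
  obtain ⟨hb₀m, hb₀d⟩ : b₀.2 = m ∧ (m : ℤ) ∣ b₀.1.1 := by
    rcases ih b₀ hb₀ ((hcol₀ b₀ hb₀).2 (Or.inl rfl)) with h | h
    · exact h.2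
    · omega
  obtain ⟨hu₀s, hu₀d⟩ : u₀.2 = s ∧ (s : ℤ) ∣ u₀.1.1 := by
    rcases ih u₀ hu₀ ((hcol₀ u₀ hu₀).2 (Or.inr rfl)) with h | h
    · omega
    · exact h.2
  have hbpos := hT.size_pos (by omega) (by omega) hb
  have hupos := hT.size_pos (by omega) (by omega) hu
  have hb_next : b₀ = b ∨ ((m : ℤ) ∣ x + 1 ∧ b.1.1 = x + 1) :=
    (hT.eq_or_start_eq_add_one hb₀ hb (y := 0) ((hcol₀ b₀ hb₀).2 (Or.inl rfl))
      ((hcol b hb).2 (Or.inl rfl)) (by simp only [rowSpan, mem_Ico]; omega)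
      (by simp only [rowSpan, mem_Ico]; omega)).imp_right
      fun h => ⟨by rw [← h.1, hb₀m]; exact dvd_add hb₀d dvd_rfl, h.2⟩
  have hu_next : u₀ = u ∨ ((s : ℤ) ∣ x + 1 ∧ u.1.1 = x + 1) :=
    (hT.eq_or_start_eq_add_one hu₀ hu (y := m + s - 1) ((hcol₀ u₀ hu₀).2 (Or.inr rfl))
      ((hcol u hu).2 (Or.inr rfl)) (by simp only [rowSpan, mem_Ico]; omega)
      (by simp only [rowSpan, mem_Ico]; omega)).imp_right
      fun h => ⟨by rw [← h.1, hu₀s]; exact dvd_add hu₀d dvd_rfl, h.2⟩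
  have hcont : b₀ = b ∨ u₀ = u := by
    rcases hb_next with h | ⟨hmd, -⟩
    · exact Or.inl h
    rcases hu_next with h | ⟨hsd, -⟩
    · exact Or.inr h
    have := Int.le_of_dvd (by omega) ((Nat.isCoprime_iff_coprime.2 hcop).mul_dvd hmd hsd)
    omega
  have hbm : b.2 = m := by rcases hcont with rfl | rfl <;> omega
  have hbd : (m : ℤ) ∣ b.1.1 := by
    rcases hb_next with rfl | ⟨hmd, hbx⟩
    exacts [hb₀d, hbx ▸ hmd]
  have hud : (s : ℤ) ∣ u.1.1 := by
    rcases hu_next with rfl | ⟨hsd, hux⟩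
    exacts [hu₀d, hux ▸ hsd]
  intro t ht htx
  rcases (hcol t ht).1 htx with rfl | rfl
  · exact Or.inl ⟨hby, hbm, hbd⟩
  · exact Or.inr ⟨by omega, by omega, hud⟩

lemma onLowMGrid (hm : 2 ≤ m) (hs : 2 ≤ s) (hcop : m.Coprime s)
    (hT : IsTiling m s (rectRegion (m * s) (m + s)) T) (h0 : ((0, 0), m) ∈ T)
    {t : (ℤ × ℤ) × ℕ} (ht : t ∈ T) : OnLowMGrid m s t := by
  obtain ⟨hx0, hxW, -, -⟩ := hT.bounds (by omega) (by omega) ht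
  have hpos := hT.size_pos (by omega) (by omega) ht
  have key : ∀ x : ℤ, 0 ≤ x → x < m * s → ∀ t ∈ T, x ∈ colSpan t → OnLowMGrid m s t := by
    intro x hx0
    induction x, hx0 using Int.leInduction with
    | base => exact fun _ => hT.onLowMGrid_of_zero_mem_colSpan hm hs hcop h0
    | succ x hx0 ih => exact fun hx => hT.onLowMGrid_succ hm hs hcop hx0 hx (ih (by omega))
  exact key t.1.1 hx0 (by push_cast at hxW; omega) t ht (by simp only [colSpan, mem_Ico]; omega)

lemma eq_hblockLowM (hm : 2 ≤ m) (hs : 2 ≤ s) (hcop : m.Coprime s)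
    (hT : IsTiling m s (rectRegion (m * s) (m + s)) T) (h0 : ((0, 0), m) ∈ T) :
    T = hblockLowM m s := by
  refine hT.eq_of_subset (isTiling_hblockLowM (by omega) (by omega)) (by omega) (by omega)
    fun t ht => ?_
  obtain ⟨ha0, haW, -, -⟩ := hT.bounds (by omega) (by omega) ht
  obtain ⟨⟨a, y⟩, k⟩ := t
  simp only at ha0 haW
  rcases hT.onLowMGrid hm hs hcop h0 ht with ⟨hy, hk, hd⟩ | ⟨hy, hk, hd⟩ <;>
    simp only at hy hk hd <;> subst hy hk
  · obtain ⟨i, hi, rfl⟩ := exists_lt_mul_eq_of_dvd (by omega) ha0 (by rwa [mul_comm s]) hd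
    exact mem_union_left _ (mem_image.2 ⟨i, mem_range.2 hi, rfl⟩)
  · obtain ⟨j, hj, rfl⟩ := exists_lt_mul_eq_of_dvd (by omega) ha0 haW hd
    exact mem_union_right _ (mem_image.2 ⟨j, mem_range.2 hj, rfl⟩)

end IsTiling

theorem horizontal_block_has_two_tilings_general (m s : ℕ) (hm : 2 ≤ m) (hs : 2 ≤ s)
    (hcop : Nat.Coprime m s) :
    {T | IsTiling m s (rectRegion (m * s) (m + s)) T} =
      {hblockLowM m s, hblockLowS m s} := by
  ext T
  simp only [Set.mem_ofPred_eq, Set.mem_insert_iff, Set.mem_singleton_iff,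
    hblockLowS_eq_hblockLowM]
  refine ⟨fun hT => ?_, ?_⟩
  · obtain ⟨k, hk, h0⟩ := hT.exists_corner_mem (by omega) (by omega) (by positivity) (by omega)
    rcases hk with rfl | rfl
    · exact Or.inl (hT.eq_hblockLowM hm hs hcop h0)
    · exact Or.inr ((isTiling_block_comm.1 hT).eq_hblockLowM hs hm hcop.symm h0)
  · rintro (rfl | rfl)
    · exact isTiling_hblockLowM (by omega) (by omega)
    · exact isTiling_block_comm.2 (isTiling_hblockLowM (by omega) (by omega))

/-- For coprime `m ≠ s`, both at least 2, the horizontal block—the ms × (m+s)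
rectangle—has exactly two (m,s)-tilings: a bottom row of s squares of size m with a top
row of m squares of size s, and the tiling with the two rows interchanged. -/
theorem horizontal_block_has_two_tilings (m s : ℕ) (hm : 2 ≤ m) (hs : 2 ≤ s)
    (hne : m ≠ s) (hcop : Nat.Coprime m s) :
    {T | IsTiling m s (rectRegion (m * s) (m + s)) T} =
      {hblockLowM m s, hblockLowS m s} :=
  horizontal_block_has_two_tilings_general m s hm hs hcop
end
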